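/- Intermediate value lemma for the Wigderson-Wigderson functional: let p, q be reals with 1 < p < q < ∞, and define F_{p,q}(f) = ‖f‖_q ‖𝓕f‖_q / (‖f‖_p ‖𝓕f‖_p) for nonzero f ∈ 𝓢(ℝ). Suppose there exist sequences (f_n) and (g_n) of nonzero Schwartz functions such that F_{p,q}(f_n) → 0 and F_{p,q}(g_n) → ∞ as n → ∞, and such that λ f_n + (1 − λ) g_n ≠ 0 for every λ ∈ [0,1] and every n. Then for every real c > 0 there exists a nonzero f ∈ 𝓢(ℝ) with F_{p,q}(f) = c. -/

import Mathlib

/-!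
Choose `n` with `F_{p,q}(f n) < c < F_{p,q}(g n)`. For `r ≥ 1` the `L^r` norm is continuous on
`𝓢(ℝ)`, being the norm of the continuous embedding `𝓢(ℝ) → L^r`, and `𝓕` is continuous on
`𝓢(ℝ)`; so `F_{p,q}` is continuous wherever its denominator is nonzero, i.e. on nonzero Schwartz
functions. The segment from `g n` to `f n` avoids `0` and is connected, so `F_{p,q}` takes every
value between its endpoint values on it.
-/

open MeasureTheory SchwartzMap

/-- The `L^r` norm of `f : ℝ → ℂ` with respect to Lebesgue measure. -/
noncomputable def Lnorm (r : ℝ) (f : ℝ → ℂ) : ℝ :=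
  (∫ x : ℝ, ‖f x‖ ^ r) ^ (1 / r)

/-- The sup norm `‖f‖_∞ = sup_x |f x|`. -/
noncomputable def Lsup (f : ℝ → ℂ) : ℝ := ⨆ x : ℝ, ‖f x‖

/-- The Fourier transform `𝓕 f (ξ) = ∫ f x · e^{-2πi x ξ} dx`. -/
noncomputable def FT (f : ℝ → ℂ) : ℝ → ℂ := fun ξ =>
  ∫ x : ℝ, f x * Complex.exp (-2 * Real.pi * Complex.I * x * ξ)

open FourierTransform

namespace SchwartzMap

theorem FT_coe (h : 𝓢(ℝ, ℂ)) : FT ⇑h = ⇑(𝓕 h : 𝓢(ℝ, ℂ)) := by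
  ext ξ
  rw [fourier_coe, Real.fourier_real_eq_integral_exp_smul, FT]
  congr 1 with x
  rw [smul_eq_mul, mul_comm]
  push_cast
  ring_nf

theorem Lnorm_eq_norm_toLp (h : 𝓢(ℝ, ℂ)) {r : ℝ} (hr : 0 < r) :
    Lnorm r ⇑h = ‖h.toLp (ENNReal.ofReal r)‖ := by
  rw [norm_toLp' (by simpa using hr) ENNReal.ofReal_ne_top, ENNReal.toReal_ofReal hr.le,
    Lnorm, one_div]

theorem Lnorm_pos {h : 𝓢(ℝ, ℂ)} (h0 : h ≠ 0) {r : ℝ} (hr : 0 < r) : 0 < Lnorm r ⇑h := by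
  rw [Lnorm_eq_norm_toLp h hr, norm_toLp]
  refine ENNReal.toReal_pos ?_ (h.eLpNorm_lt_top _ volume).ne
  rw [Ne, eLpNorm_eq_zero_iff h.continuous.aestronglyMeasurable (by simpa using hr),
    Continuous.ae_eq_iff_eq volume h.continuous continuous_zero]
  exact fun hzero => h0 (SchwartzMap.ext (congrFun hzero))

theorem continuous_Lnorm {r : ℝ} (hr : 1 ≤ r) : Continuous fun h : 𝓢(ℝ, ℂ) => Lnorm r ⇑h := by
  have : Fact (1 ≤ ENNReal.ofReal r) := ⟨by simpa using hr⟩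
  simp_rw [fun h : 𝓢(ℝ, ℂ) => Lnorm_eq_norm_toLp h (zero_lt_one.trans_le hr)]
  fun_prop

theorem continuous_Lnorm_FT {r : ℝ} (hr : 1 ≤ r) :
    Continuous fun h : 𝓢(ℝ, ℂ) => Lnorm r (FT ⇑h) := by
  simp_rw [FT_coe]
  exact (continuous_Lnorm hr).comp ContinuousFourier.continuous_fourier

end SchwartzMap

noncomputable def wwFunctional (p q : ℝ) (h : 𝓢(ℝ, ℂ)) : ℝ :=
  Lnorm q ⇑h * Lnorm q (FT ⇑h) / (Lnorm p ⇑h * Lnorm p (FT ⇑h))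

theorem continuousOn_wwFunctional {p q : ℝ} (hp : 1 ≤ p) (hq : 1 ≤ q) :
    ContinuousOn (wwFunctional p q) {h | h ≠ 0} := by
  refine ((continuous_Lnorm hq).mul (continuous_Lnorm_FT hq)).continuousOn.div
    ((continuous_Lnorm hp).mul (continuous_Lnorm_FT hp)).continuousOn fun h h0 => ?_
  have hp0 : 0 < p := zero_lt_one.trans_le hp
  have hFh0 : (𝓕 h : 𝓢(ℝ, ℂ)) ≠ 0 := (fourierCLE ℂ 𝓢(ℝ, ℂ)).map_ne_zero_iff.mpr h0
  rw [FT_coe]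
  exact (mul_pos (Lnorm_pos h0 hp0) (Lnorm_pos hFh0 hp0)).ne'

theorem WW_functional_IVT_general (p q : ℝ) (hp : 1 < p) (hpq : p < q)
    (f g : ℕ → SchwartzMap ℝ ℂ)
    (hf : Filter.Tendsto
      (fun n => Lnorm q ⇑(f n) * Lnorm q (FT ⇑(f n)) / (Lnorm p ⇑(f n) * Lnorm p (FT ⇑(f n))))
      Filter.atTop (nhds 0))
    (hg : Filter.Tendsto
      (fun n => Lnorm q ⇑(g n) * Lnorm q (FT ⇑(g n)) / (Lnorm p ⇑(g n) * Lnorm p (FT ⇑(g n))))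
      Filter.atTop Filter.atTop)
    (hcomb : ∀ lam : ℝ, lam ∈ Set.Icc (0:ℝ) 1 → ∀ n,
      (lam : ℂ) • f n + ((1 - lam : ℝ) : ℂ) • g n ≠ 0)
    (c : ℝ) (hc : 0 < c) :
    ∃ h : SchwartzMap ℝ ℂ, h ≠ 0 ∧
      Lnorm q ⇑h * Lnorm q (FT ⇑h) / (Lnorm p ⇑h * Lnorm p (FT ⇑h)) = c := by
  obtain ⟨n, hfn, hgn⟩ := ((hf.eventually (gt_mem_nhds hc)).and (hg.eventually_gt_atTop c)).exists
  have hseg : segment ℝ (g n) (f n) ⊆ {h | h ≠ 0} := by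
    rw [segment_eq_image]
    rintro _ ⟨lam, hlam, rfl⟩
    show (1 - lam) • g n + lam • f n ≠ 0
    rw [add_comm]
    convert hcomb lam hlam n using 2 <;> exact RCLike.real_smul_eq_coe_smul _ _
  obtain ⟨h, hh, hFh⟩ := (convex_segment (g n) (f n)).isPreconnected.intermediate_value
    (right_mem_segment ℝ _ _) (left_mem_segment ℝ _ _)
    ((continuousOn_wwFunctional hp.le (hp.trans hpq).le).mono hseg) ⟨hfn.le, hgn.le⟩
  exact ⟨h, hseg hh, hFh⟩

/-- Intermediate value lemma for the Wigderson-Wigderson functional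
`F_{p,q}(f) = ‖f‖_q ‖𝓕f‖_q / (‖f‖_p ‖𝓕f‖_p)`. -/
theorem WW_functional_IVT (p q : ℝ) (hp : 1 < p) (hpq : p < q)
    (f g : ℕ → SchwartzMap ℝ ℂ)
    (hf0 : ∀ n, f n ≠ 0) (hg0 : ∀ n, g n ≠ 0)
    (hf : Filter.Tendsto
      (fun n => Lnorm q ⇑(f n) * Lnorm q (FT ⇑(f n)) / (Lnorm p ⇑(f n) * Lnorm p (FT ⇑(f n))))
      Filter.atTop (nhds 0))
    (hg : Filter.Tendsto
      (fun n => Lnorm q ⇑(g n) * Lnorm q (FT ⇑(g n)) / (Lnorm p ⇑(g n) * Lnorm p (FT ⇑(g n))))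
      Filter.atTop Filter.atTop)
    (hcomb : ∀ lam : ℝ, lam ∈ Set.Icc (0:ℝ) 1 → ∀ n,
      (lam : ℂ) • f n + ((1 - lam : ℝ) : ℂ) • g n ≠ 0)
    (c : ℝ) (hc : 0 < c) :
    ∃ h : SchwartzMap ℝ ℂ, h ≠ 0 ∧
      Lnorm q ⇑h * Lnorm q (FT ⇑h) / (Lnorm p ⇑h * Lnorm p (FT ⇑h)) = c :=
  WW_functional_IVT_general p q hp hpq f g hf hg hcomb c hc
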